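/- arXiv:1901.11363 — 3 statements merged into one kernel-verified Lean document; each statement's English description precedes it below -/
import Mathlib

section
/- There exists a constant C > 0 such that for all x ≥ 0 and y > 0, σ(x) − σ(y) − σ'(y)·(x−y) ≥ C·(x−y)²/((1+y)(x+y)), where σ(x) = x·ln(x) − (1+x)·ln(1+x) (with σ(0) := 0). -/
noncomputable def sigmaBose (x : ℝ) : ℝ := x * Real.log x - (1 + x) * Real.log (1 + x)

/-- The derivative σ'(y) = ln y − ln(1+y). -/
noncomputable def sigmaBose' (y : ℝ) : ℝ := Real.log y - Real.log (1 + y)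

/-!
The left-hand side is `D(x, y) = x (σ'(x) - σ'(y)) + log ((1 + y) / (1 + x))`, with
`σ'(x) - σ'(y) = log (x (1 + y) / (y (1 + x)))`. Both logarithms of ratios are squeezed by the
elementary bounds `2 (a - b) / (a + b) ≤ log (a / b) ≤ (a² - b²) / (2 a b)` for `0 < b ≤ a`
(the first term of the artanh series, and `log t ≤ sinh (log t)`). In each of the cases `y ≤ x`
and `x ≤ y` this leaves a rational function of `x, y` whose excess over
`(x - y)² / (2 (1 + y) (x + y))` is `(x - y)²` times a fraction with nonnegative coefficients,
so `C = 1/2` works.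
-/

open Real

theorem Real.two_mul_div_add_two_le_log_one_add {a : ℝ} (ha : 0 ≤ a) :
    2 * a / (a + 2) ≤ log (1 + a) := by
  simpa [mul_div_assoc] using le_hasSum (hasSum_log_one_add ha) 0 fun k _ ↦ by positivity

theorem Real.log_one_add_le_mul_add_two_div {a : ℝ} (ha : 0 ≤ a) :
    log (1 + a) ≤ a * (a + 2) / (2 * (1 + a)) := by
  have h := self_le_sinh_iff.2 (log_nonneg (by linarith : 1 ≤ 1 + a))
  rw [sinh_log (by positivity)] at h
  convert h using 1
  field_simp
  ring

theorem Real.two_mul_sub_div_add_le_log_sub_log {a b : ℝ} (hb : 0 < b) (hba : b ≤ a) :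
    2 * (a - b) / (a + b) ≤ log a - log b := by
  have h := two_mul_div_add_two_le_log_one_add (div_nonneg (sub_nonneg.2 hba) hb.le)
  rw [one_add_div hb.ne', add_sub_cancel, log_div (hb.trans_le hba).ne' hb.ne'] at h
  convert h using 1
  field_simp
  ring

theorem Real.log_sub_log_le_sub_mul_add_div {a b : ℝ} (hb : 0 < b) (hba : b ≤ a) :
    log a - log b ≤ (a - b) * (a + b) / (2 * a * b) := by
  have ha : 0 < a := hb.trans_le hba
  have h := log_one_add_le_mul_add_two_div (div_nonneg (sub_nonneg.2 hba) hb.le)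
  rw [one_add_div hb.ne', add_sub_cancel, log_div ha.ne' hb.ne'] at h
  convert h using 1
  field_simp
  ring

theorem sigmaBose_bregman_eq (x y : ℝ) :
    sigmaBose x - sigmaBose y - sigmaBose' y * (x - y) =
      x * (sigmaBose' x - sigmaBose' y) + (log (1 + y) - log (1 + x)) := by
  simp only [sigmaBose, sigmaBose']
  ring

theorem sigmaBose'_sub_sigmaBose' {x y : ℝ} (hx : 0 < x) (hy : 0 < y) :
    sigmaBose' x - sigmaBose' y = log (x * (1 + y)) - log (y * (1 + x)) := by
  simp only [sigmaBose']
  rw [log_mul hx.ne' (by positivity), log_mul hy.ne' (by positivity)]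
  ring

theorem two_mul_sub_div_le_sigmaBose'_sub {x y : ℝ} (hy : 0 < y) (hyx : y ≤ x) :
    2 * (x - y) / (x + y + 2 * x * y) ≤ sigmaBose' x - sigmaBose' y := by
  have hx : 0 < x := hy.trans_le hyx
  have h := two_mul_sub_div_add_le_log_sub_log (a := x * (1 + y)) (b := y * (1 + x))
    (by positivity) (by nlinarith)
  rw [sigmaBose'_sub_sigmaBose' hx hy]
  convert h using 2 <;> ring

-- The factor `x` is kept because the bound on `σ'(x) - σ'(y)` alone blows up like `1 / x` at `0`.
theorem neg_le_mul_sigmaBose'_sub {x y : ℝ} (hx : 0 ≤ x) (hxy : x ≤ y) :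
    -((y - x) * (x + y + 2 * x * y) / (2 * y * (1 + x) * (1 + y))) ≤
      x * (sigmaBose' x - sigmaBose' y) := by
  rcases hx.eq_or_lt with rfl | hx
  · simp only [zero_mul, neg_nonpos]
    positivity
  have hy : 0 < y := hx.trans_le hxy
  have h := log_sub_log_le_sub_mul_add_div (a := y * (1 + x)) (b := x * (1 + y))
    (by positivity) (by nlinarith)
  have hmul : x * ((y * (1 + x) - x * (1 + y)) * (y * (1 + x) + x * (1 + y)) /
      (2 * (y * (1 + x)) * (x * (1 + y)))) =
      (y - x) * (x + y + 2 * x * y) / (2 * y * (1 + x) * (1 + y)) := by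
    field_simp
    ring
  rw [sigmaBose'_sub_sigmaBose' hx hy, ← hmul, neg_le, ← mul_neg, neg_sub]
  exact mul_le_mul_of_nonneg_left h hx.le

theorem sigmaBose_bregman_ge_of_le {x y : ℝ} (hy : 0 < y) (hyx : y ≤ x) :
    1 / 2 * (x - y) ^ 2 / ((1 + y) * (x + y)) ≤
      sigmaBose x - sigmaBose y - sigmaBose' y * (x - y) := by
  have hx : 0 < x := hy.trans_le hyx
  have hσ' := mul_le_mul_of_nonneg_left (two_mul_sub_div_le_sigmaBose'_sub hy hyx) hx.le
  have hlog := log_sub_log_le_sub_mul_add_div (a := 1 + x) (b := 1 + y) (by positivity)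
    (by linarith)
  have hgap : 1 / 2 * (x - y) ^ 2 / ((1 + y) * (x + y)) ≤ x * (2 * (x - y) / (x + y + 2 * x * y)) -
      ((1 + x) - (1 + y)) * ((1 + x) + (1 + y)) / (2 * (1 + x) * (1 + y)) := by
    rw [← sub_nonneg]
    have h : x * (2 * (x - y) / (x + y + 2 * x * y)) -
        ((1 + x) - (1 + y)) * ((1 + x) + (1 + y)) / (2 * (1 + x) * (1 + y)) -
        1 / 2 * (x - y) ^ 2 / ((1 + y) * (x + y)) =
        (x - y) ^ 2 * (x + y + 2 * x ^ 2 + x * y + y ^ 2 + 2 * x * y ^ 2) /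
          (2 * (1 + x) * (1 + y) * (x + y) * (x + y + 2 * x * y)) := by
      field_simp
      ring
    rw [h]
    positivity
  rw [sigmaBose_bregman_eq]
  linarith

theorem sigmaBose_bregman_ge_of_ge {x y : ℝ} (hx : 0 ≤ x) (hy : 0 < y) (hxy : x ≤ y) :
    1 / 2 * (x - y) ^ 2 / ((1 + y) * (x + y)) ≤
      sigmaBose x - sigmaBose y - sigmaBose' y * (x - y) := by
  have hσ' := neg_le_mul_sigmaBose'_sub hx hxy
  have hlog := two_mul_sub_div_add_le_log_sub_log (a := 1 + y) (b := 1 + x) (by positivity)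
    (by linarith)
  have hgap : 1 / 2 * (x - y) ^ 2 / ((1 + y) * (x + y)) ≤
      -((y - x) * (x + y + 2 * x * y) / (2 * y * (1 + x) * (1 + y))) +
        2 * ((1 + y) - (1 + x)) / ((1 + y) + (1 + x)) := by
    rw [← sub_nonneg]
    have h : -((y - x) * (x + y + 2 * x * y) / (2 * y * (1 + x) * (1 + y))) +
        2 * ((1 + y) - (1 + x)) / ((1 + y) + (1 + x)) -
        1 / 2 * (x - y) ^ 2 / ((1 + y) * (x + y)) =
        (x - y) ^ 2 * (2 * x + x ^ 2 + x * y + 2 * y ^ 2 + x ^ 2 * y + x * y ^ 2) /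
          (2 * y * (1 + x) * (1 + y) * (x + y) * (2 + x + y)) := by
      field_simp
      ring
    rw [h]
    positivity
  rw [sigmaBose_bregman_eq]
  linarith

theorem bosonic_relative_entropy_coercivity_pointwise :
    ∃ C : ℝ, 0 < C ∧ ∀ x y : ℝ, 0 ≤ x → 0 < y →
      sigmaBose x - sigmaBose y - sigmaBose' y * (x - y) ≥
        C * (x - y) ^ 2 / ((1 + y) * (x + y)) := by
  refine ⟨1 / 2, by norm_num, fun x y hx hy ↦ ?_⟩
  rcases le_total y x with hyx | hxy
  · exact sigmaBose_bregman_ge_of_le hy hyx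
  · exact sigmaBose_bregman_ge_of_ge hx hy hxy
end

section
/- Let H be a Hermitian n×n matrix, β > 0, and let Γ be any density matrix (positive semidefinite with trace 1). Then tr[HΓ] + (1/β) tr[Γ ln Γ] ≥ −(1/β) ln tr[e^{−βH}], with equality if and only if Γ = e^{−βH}/tr[e^{−βH}]. -/
open Matrix

/-- The von Neumann entropy of a positive semidefinite matrix, via its eigenvalues
(with the convention `0 · ln 0 = 0`, which is automatic since `Real.log 0 = 0`). -/
noncomputable def vonNeumannEntropy {n : ℕ} {Γ : Matrix (Fin n) (Fin n) ℝ}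
    (hΓ : Γ.PosSemidef) : ℝ :=
  -∑ i, hΓ.1.eigenvalues i * Real.log (hΓ.1.eigenvalues i)

/-!
Diagonalize `H = U diag(ε) U*` and `Γ = V diag(p) V*`. For the orthogonal matrix `W = U* V`, the
matrix `P = W ⊙ W` is doubly stochastic and `tr(HΓ) = ∑ P_jk ε_j p_k`. With the Gibbs weights
`μ_j = e^{-β ε_j} / Z`, the gap `β F(Γ) + ln Z` becomes `∑ P_jk μ_j klFun (p_k / μ_j)`, a sum
of nonnegative terms. It vanishes iff `p_k = μ_j` whenever `W_jk ≠ 0`, i.e. iff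
`W diag(p) W* = diag(μ)`, i.e. iff `Γ = U diag(μ) U*` is the Gibbs state.
-/

open Finset Real InformationTheory Unitary

lemma mul_klFun_div (l : ℝ) {m : ℝ} (hm : m ≠ 0) :
    m * klFun (l / m) = l * log l - l * log m + m - l := by
  rcases eq_or_ne l 0 with rfl | hl
  · simp [klFun]
  · rw [klFun_apply, log_div hl hm]
    field_simp

lemma mul_klFun_div_nonneg {l m : ℝ} (hl : 0 ≤ l) (hm : 0 < m) : 0 ≤ m * klFun (l / m) :=
  mul_nonneg hm.le (klFun_nonneg (div_nonneg hl hm.le))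

lemma mul_klFun_div_eq_zero_iff {l m : ℝ} (hl : 0 ≤ l) (hm : 0 < m) :
    m * klFun (l / m) = 0 ↔ l = m := by
  rw [mul_eq_zero, klFun_eq_zero_iff (div_nonneg hl hm.le), div_eq_one_iff_eq hm.ne']
  simp [hm.ne']

noncomputable def gibbsWeights {ι : Type*} [Fintype ι] (β : ℝ) (ε : ι → ℝ) (j : ι) : ℝ :=
  exp (-β * ε j) / ∑ i, exp (-β * ε i)

section GibbsWeights

variable {ι : Type*} [Fintype ι] (β : ℝ) (ε : ι → ℝ)

lemma gibbsWeights_eq_smul :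
    gibbsWeights β ε = (∑ i, exp (-β * ε i))⁻¹ • fun j ↦ exp (-β * ε j) :=
  funext fun _ ↦ div_eq_inv_mul _ _

variable [Nonempty ι]

lemma sum_exp_pos : 0 < ∑ i, exp (-β * ε i) :=
  sum_pos (fun _ _ ↦ exp_pos _) univ_nonempty

lemma gibbsWeights_pos (j : ι) : 0 < gibbsWeights β ε j :=
  div_pos (exp_pos _) (sum_exp_pos β ε)

lemma sum_gibbsWeights : ∑ j, gibbsWeights β ε j = 1 := by
  simp only [gibbsWeights, ← sum_div, div_self (sum_exp_pos β ε).ne']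

lemma log_gibbsWeights (j : ι) :
    log (gibbsWeights β ε j) = -β * ε j - log (∑ i, exp (-β * ε i)) := by
  rw [gibbsWeights, log_div (exp_pos _).ne' (sum_exp_pos β ε).ne', log_exp]

end GibbsWeights

namespace Matrix

variable {n : Type*} [Fintype n] [DecidableEq n]

section DoublyStochastic

variable {R : Type*} [Semiring R] [PartialOrder R] [IsOrderedRing R] {P : Matrix n n R}

lemma sum_sum_mul_apply_col_of_mem_doublyStochastic (hP : P ∈ doublyStochastic R n)
    (f : n → R) : ∑ j, ∑ k, P j k * f k = ∑ k, f k :=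
  sum_mulVec_of_mem_doublyStochastic hP

lemma sum_sum_mul_apply_row_of_mem_doublyStochastic (hP : P ∈ doublyStochastic R n)
    (g : n → R) : ∑ j, ∑ k, P j k * g j = ∑ j, g j := by
  simp [← Finset.sum_mul, sum_row_of_mem_doublyStochastic hP]

end DoublyStochastic

section GibbsInequality

variable {P : Matrix n n ℝ} {l m : n → ℝ}

lemma sum_mul_log_sub_sum_sum_mul_log_eq_sum_sum_mul_klFun (hP : P ∈ doublyStochastic ℝ n)
    (hm : ∀ j, m j ≠ 0) (hsum : ∑ k, l k = ∑ j, m j) :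
    ∑ k, l k * log (l k) - ∑ j, ∑ k, P j k * l k * log (m j) =
      ∑ j, ∑ k, P j k * (m j * klFun (l k / m j)) := by
  simp only [mul_klFun_div _ (hm _), mul_add, mul_sub, sum_add_distrib, sum_sub_distrib,
    mul_assoc, sum_sum_mul_apply_col_of_mem_doublyStochastic hP,
    sum_sum_mul_apply_row_of_mem_doublyStochastic hP, hsum]
  ring

/-- Gibbs' inequality for distributions coupled by a doubly stochastic matrix
(`P = 1` is the classical case). -/
theorem sum_sum_mul_log_le_of_mem_doublyStochastic (hP : P ∈ doublyStochastic ℝ n)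
    (hl : ∀ k, 0 ≤ l k) (hm : ∀ j, 0 < m j) (hsum : ∑ k, l k = ∑ j, m j) :
    ∑ j, ∑ k, P j k * l k * log (m j) ≤ ∑ k, l k * log (l k) := by
  rw [← sub_nonneg,
    sum_mul_log_sub_sum_sum_mul_log_eq_sum_sum_mul_klFun hP (fun j ↦ (hm j).ne') hsum]
  exact sum_nonneg fun j _ ↦ sum_nonneg fun k _ ↦
    mul_nonneg (nonneg_of_mem_doublyStochastic hP) (mul_klFun_div_nonneg (hl k) (hm j))

theorem sum_sum_mul_log_eq_iff_of_mem_doublyStochastic (hP : P ∈ doublyStochastic ℝ n)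
    (hl : ∀ k, 0 ≤ l k) (hm : ∀ j, 0 < m j) (hsum : ∑ k, l k = ∑ j, m j) :
    ∑ j, ∑ k, P j k * l k * log (m j) = ∑ k, l k * log (l k) ↔
      ∀ j k, P j k ≠ 0 → l k = m j := by
  have hterm (j k : n) : 0 ≤ P j k * (m j * klFun (l k / m j)) :=
    mul_nonneg (nonneg_of_mem_doublyStochastic hP) (mul_klFun_div_nonneg (hl k) (hm j))
  rw [eq_comm, ← sub_eq_zero,
    sum_mul_log_sub_sum_sum_mul_log_eq_sum_sum_mul_klFun hP (fun j ↦ (hm j).ne') hsum,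
    sum_eq_zero_iff_of_nonneg fun j _ ↦ sum_nonneg fun k _ ↦ hterm j k]
  simp only [mem_univ, forall_const, sum_eq_zero_iff_of_nonneg fun k _ ↦ hterm _ k, mul_eq_zero,
    mul_klFun_div_eq_zero_iff (hl _) (hm _), or_iff_not_imp_left]

lemma sum_sum_mul_log_gibbsWeights [Nonempty n] (β : ℝ) (ε : n → ℝ)
    (hP : P ∈ doublyStochastic ℝ n) {p : n → ℝ} (hp : ∑ k, p k = 1) :
    ∑ j, ∑ k, P j k * p k * log (gibbsWeights β ε j) =
      -β * ∑ j, ∑ k, P j k * p k * ε j - log (∑ i, exp (-β * ε i)) := by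
  have hPp : ∑ j, ∑ k, P j k * p k = 1 := by
    rw [sum_sum_mul_apply_col_of_mem_doublyStochastic hP, hp]
  calc ∑ j, ∑ k, P j k * p k * log (gibbsWeights β ε j)
      = ∑ j, ∑ k, (-β * (P j k * p k * ε j) - P j k * p k * log (∑ i, exp (-β * ε i))) :=
        sum_congr rfl fun j _ ↦ sum_congr rfl fun k _ ↦ by rw [log_gibbsWeights]; ring
    _ = _ := by simp only [sum_sub_distrib, ← Finset.mul_sum, ← sum_mul, hPp, one_mul]

end GibbsInequality

section Unitary

variable {R : Type*} [CommRing R] [StarRing R]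

lemma trace_conjStarAlgAut (u : unitaryGroup n R) (A : Matrix n n R) :
    (conjStarAlgAut R _ u A).trace = A.trace := by
  rw [conjStarAlgAut_apply, trace_mul_cycle, coe_star_mul_self, one_mul]

lemma conjStarAlgAut_diagonal_eq_diagonal_iff [NoZeroDivisors R] (w : unitaryGroup n R)
    {a b : n → R} :
    conjStarAlgAut R _ w (diagonal a) = diagonal b ↔
      ∀ j k, (w : Matrix n n R) j k ≠ 0 → a k = b j := by
  calc conjStarAlgAut R _ w (diagonal a) = diagonal b ↔
        (w : Matrix n n R) * diagonal a = diagonal b * w := by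
        rw [conjStarAlgAut_apply]
        constructor
        · intro h; rw [← h, Matrix.mul_assoc, mem_unitaryGroup_iff'.1 w.2, Matrix.mul_one]
        · intro h; rw [h, Matrix.mul_assoc, mem_unitaryGroup_iff.1 w.2, Matrix.mul_one]
    _ ↔ ∀ j k, (w : Matrix n n R) j k ≠ 0 → a k = b j := by
        simp only [← Matrix.ext_iff, mul_diagonal, diagonal_mul]
        refine forall₂_congr fun j k ↦ ?_
        rw [mul_comm (b j), ← sub_eq_zero, ← mul_sub, mul_eq_zero, sub_eq_zero,
          or_iff_not_imp_left]

lemma exp_conjStarAlgAut {𝕜 : Type*} [RCLike 𝕜] (u : unitaryGroup n 𝕜)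
    (A : Matrix n n 𝕜) :
    NormedSpace.exp (conjStarAlgAut 𝕜 _ u A) = conjStarAlgAut 𝕜 _ u (NormedSpace.exp A) := by
  simp only [conjStarAlgAut_apply]
  rw [← inv_eq_left_inv (mem_unitaryGroup_iff'.1 u.2), exp_conj _ A isUnit_coe]

lemma hadamard_self_mem_doublyStochastic (w : unitaryGroup n ℝ) :
    (w : Matrix n n ℝ) ⊙ w ∈ doublyStochastic ℝ n := by
  refine mem_doublyStochastic_iff_sum.2 ⟨fun j k ↦ mul_self_nonneg _, fun j ↦ ?_, fun k ↦ ?_⟩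
  · simpa [mul_apply] using congr_fun₂ (coe_mul_star_self w) j j
  · simpa [mul_apply] using congr_fun₂ (coe_star_mul_self w) k k

lemma trace_diagonal_mul_conjStarAlgAut_diagonal (w : unitaryGroup n ℝ) (d e : n → ℝ) :
    (diagonal d * conjStarAlgAut ℝ _ w (diagonal e)).trace =
      ∑ j, ∑ k, ((w : Matrix n n ℝ) ⊙ w) j k * e k * d j := by
  simp only [conjStarAlgAut_apply, trace, diag_apply, diagonal_mul,
    mul_apply (M := (w : Matrix n n ℝ) * diagonal e), mul_diagonal, star_apply, star_trivial,
    hadamard_apply, Finset.mul_sum]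
  exact sum_congr rfl fun j _ ↦ sum_congr rfl fun k _ ↦ by ring

end Unitary

namespace IsHermitian

variable {A B : Matrix n n ℝ}

lemma eq_conjStarAlgAut_diagonal (hA : A.IsHermitian) :
    A = conjStarAlgAut ℝ _ hA.eigenvectorUnitary (diagonal hA.eigenvalues) := by
  simpa using hA.spectral_theorem

noncomputable def eigenbasisOverlap (hA : A.IsHermitian) (hB : B.IsHermitian) :
    unitaryGroup n ℝ :=
  star hA.eigenvectorUnitary * hB.eigenvectorUnitary

lemma eq_conjStarAlgAut_conjStarAlgAut_eigenbasisOverlap (hA : A.IsHermitian)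
    (hB : B.IsHermitian) :
    B = conjStarAlgAut ℝ _ hA.eigenvectorUnitary
      (conjStarAlgAut ℝ _ (hA.eigenbasisOverlap hB) (diagonal hB.eigenvalues)) := by
  rw [eigenbasisOverlap, ← conjStarAlgAut_mul_apply, ← mul_assoc, mul_star_self,
    one_mul]
  exact hB.eq_conjStarAlgAut_diagonal

lemma trace_mul_eq_sum_sum (hA : A.IsHermitian) (hB : B.IsHermitian) :
    (A * B).trace = ∑ j, ∑ k, ((hA.eigenbasisOverlap hB : Matrix n n ℝ) ⊙
      hA.eigenbasisOverlap hB) j k * hB.eigenvalues k * hA.eigenvalues j := by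
  conv_lhs =>
    rw [hA.eq_conjStarAlgAut_diagonal, hA.eq_conjStarAlgAut_conjStarAlgAut_eigenbasisOverlap hB]
  rw [← map_mul, trace_conjStarAlgAut, trace_diagonal_mul_conjStarAlgAut_diagonal]

lemma exp_smul (hA : A.IsHermitian) (c : ℝ) :
    NormedSpace.exp (c • A) =
      conjStarAlgAut ℝ _ hA.eigenvectorUnitary
        (diagonal fun j ↦ Real.exp (c * hA.eigenvalues j)) := by
  conv_lhs => rw [hA.eq_conjStarAlgAut_diagonal]
  rw [← map_smul, exp_conjStarAlgAut, ← diagonal_smul, exp_diagonal]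
  simp only [Pi.exp_def, Pi.smul_apply, smul_eq_mul, Real.exp_eq_exp_ℝ]

lemma trace_exp_neg_smul (hA : A.IsHermitian) (β : ℝ) :
    (NormedSpace.exp (-β • A)).trace = ∑ j, Real.exp (-β * hA.eigenvalues j) := by
  rw [hA.exp_smul, trace_conjStarAlgAut, trace_diagonal]

lemma inv_trace_smul_exp_neg_smul (hA : A.IsHermitian) (β : ℝ) :
    ((NormedSpace.exp (-β • A)).trace)⁻¹ • NormedSpace.exp (-β • A) =
      conjStarAlgAut ℝ _ hA.eigenvectorUnitary (diagonal (gibbsWeights β hA.eigenvalues)) := by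
  rw [hA.trace_exp_neg_smul, hA.exp_smul, ← map_smul, ← diagonal_smul, gibbsWeights_eq_smul]

end IsHermitian

end Matrix

theorem gibbs_variational_principle {n : ℕ} (H Γ : Matrix (Fin n) (Fin n) ℝ)
    (hH : H.IsHermitian) (hΓ : Γ.PosSemidef) (hΓtr : Γ.trace = 1) (β : ℝ) (hβ : 0 < β) :
    (H * Γ).trace - (1 / β) * vonNeumannEntropy hΓ ≥
      -(1 / β) * Real.log (NormedSpace.exp (-β • H)).trace ∧
    ((H * Γ).trace - (1 / β) * vonNeumannEntropy hΓ =
        -(1 / β) * Real.log (NormedSpace.exp (-β • H)).trace ↔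
      Γ = ((NormedSpace.exp (-β • H)).trace)⁻¹ • NormedSpace.exp (-β • H)) := by
  set p := hΓ.1.eigenvalues
  set w := hH.eigenbasisOverlap hΓ.1
  set P := (w : Matrix (Fin n) (Fin n) ℝ) ⊙ w
  have hP : P ∈ doublyStochastic ℝ (Fin n) := hadamard_self_mem_doublyStochastic w
  have hp : ∀ k, 0 ≤ p k := hΓ.eigenvalues_nonneg
  have hp1 : ∑ k, p k = 1 := by simpa [hΓtr] using hΓ.1.trace_eq_sum_eigenvalues.symm
  have : Nonempty (Fin n) := univ_nonempty_iff.1 (nonempty_of_sum_ne_zero (hp1 ▸ one_ne_zero))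
  have hμ := gibbsWeights_pos β hH.eigenvalues
  have hsum : ∑ k, p k = ∑ j, gibbsWeights β hH.eigenvalues j := by rw [hp1, sum_gibbsWeights]
  have hgap : (H * Γ).trace - (1 / β) * vonNeumannEntropy hΓ -
      -(1 / β) * log (NormedSpace.exp (-β • H)).trace = β⁻¹ * (∑ k, p k * log (p k) -
        ∑ j, ∑ k, P j k * p k * log (gibbsWeights β hH.eigenvalues j)) := by
    rw [sum_sum_mul_log_gibbsWeights β _ hP hp1, hH.trace_exp_neg_smul,
      ← hH.trace_mul_eq_sum_sum hΓ.1, vonNeumannEntropy]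
    field_simp
    ring
  refine ⟨?_, ?_⟩
  · rw [ge_iff_le, ← sub_nonneg, hgap]
    exact mul_nonneg (inv_nonneg.2 hβ.le)
      (sub_nonneg.2 (sum_sum_mul_log_le_of_mem_doublyStochastic hP hp hμ hsum))
  · rw [← sub_eq_zero, hgap, mul_eq_zero, or_iff_right (inv_ne_zero hβ.ne'), sub_eq_zero, eq_comm,
      sum_sum_mul_log_eq_iff_of_mem_doublyStochastic hP hp hμ hsum, hH.inv_trace_smul_exp_neg_smul,
      hH.eq_conjStarAlgAut_conjStarAlgAut_eigenbasisOverlap hΓ.1, EquivLike.apply_eq_iff_eq,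
      conjStarAlgAut_diagonal_eq_diagonal_iff]
    simp only [P, hadamard_apply, ne_eq, mul_self_eq_zero, p, w]
end

section
/- Let Γ = Σ_{α=1}^m λ_α |ψ_α⟩⟨ψ_α| be a density matrix on a finite-dimensional Hilbert space (λ_α ≥ 0, Σλ_α = 1, ψ_α orthonormal), and let {P_α}_{α=1}^m be a family of rank-one orthogonal projections (not necessarily mutually orthogonal). Define Γ̂ = Σ_α λ_α P_α. Then S(Γ̂) ≥ S(Γ) − ln‖Σ_α P_α‖, where S denotes the von Neumann entropy and ‖·‖ the operator norm. -/
/-!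
Let `b_i` be an orthonormal eigenbasis of `Γ̂` with eigenvalues `μ_i` and put
`P_{iα} = ⟨b_i, u_α⟩²`. Each column of `P` sums to `‖u_α‖² = 1` and `μ_i = Σ_α λ_α P_{iα}`.
Jensen's inequality for `log`, with weights `λ_α P_{iα}` at the points `μ_i / λ_α`, gives
`Σ_i μ_i log μ_i - Σ_α λ_α log λ_α ≤ log Σ_{α,i} P_{iα} μ_i`, and
`Σ_{α,i} P_{iα} μ_i = Σ_α ⟨u_α, Γ̂ u_α⟩ = Σ_β λ_β ⟨u_β, T u_β⟩ ≤ ‖T‖` for `T = Σ_α |u_α⟩⟨u_α|`.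
-/

open Matrix Real Finset

theorem Real.sum_mul_log_le_log_of_sum_mul_le {ι : Type*} (s : Finset ι) {w x : ι → ℝ} {B : ℝ}
    (hw : ∀ i ∈ s, 0 ≤ w i) (hw1 : ∑ i ∈ s, w i = 1) (hx : ∀ i ∈ s, w i ≠ 0 → 0 < x i)
    (hB : ∑ i ∈ s, w i * x i ≤ B) :
    ∑ i ∈ s, w i * log (x i) ≤ log B := by
  classical
  set t := s.filter (w · ≠ 0)
  have hsum : ∀ f : ι → ℝ, ∑ i ∈ s, w i * f i = ∑ i ∈ t, w i * f i := fun f =>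
    (sum_filter_of_ne fun i _ h => left_ne_zero_of_mul h).symm
  have ht1 : ∑ i ∈ t, w i = 1 := by rw [sum_filter_ne_zero, hw1]
  have htx : ∀ i ∈ t, 0 < x i := fun i hi =>
    hx i (mem_of_mem_filter i hi) (mem_filter.1 hi).2
  have htw : ∀ i ∈ t, 0 < w i := fun i hi =>
    (hw i (mem_of_mem_filter i hi)).lt_of_ne' (mem_filter.1 hi).2
  have hpos : 0 < ∑ i ∈ t, w i * x i :=
    sum_pos (fun i hi => mul_pos (htw i hi) (htx i hi))
      (nonempty_of_sum_ne_zero (by rw [ht1]; exact one_ne_zero))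
  calc ∑ i ∈ s, w i * log (x i) = ∑ i ∈ t, w i * log (x i) := hsum _
    _ ≤ log (∑ i ∈ t, w i * x i) :=
      strictConcaveOn_log_Ioi.concaveOn.le_map_sum (fun i hi => (htw i hi).le) ht1 htx
    _ ≤ log B := log_le_log hpos (hsum x ▸ hB)

theorem Real.sum_mul_log_le_of_stochastic_mix {ι κ : Type*} [Fintype ι] [Fintype κ]
    {lam : κ → ℝ} {P : ι → κ → ℝ} {μ : ι → ℝ} {B : ℝ}
    (hlam : ∀ α, 0 ≤ lam α) (hlam1 : ∑ α, lam α = 1)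
    (hP : ∀ i α, 0 ≤ P i α) (hP1 : ∀ α, ∑ i, P i α = 1)
    (hμ : ∀ i, μ i = ∑ α, lam α * P i α) (hB : ∑ α, ∑ i, P i α * μ i ≤ B) :
    ∑ i, μ i * log (μ i) ≤ ∑ α, lam α * log (lam α) + log B := by
  set w : κ × ι → ℝ := fun p => lam p.1 * P p.2 p.1
  set x : κ × ι → ℝ := fun p => μ p.2 / lam p.1
  have hw : ∀ p, 0 ≤ w p := fun p => mul_nonneg (hlam _) (hP _ _)
  have hle_μ : ∀ α i, w (α, i) ≤ μ i := fun α i =>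
    hμ i ▸ single_le_sum (f := fun β => lam β * P i β) (fun β _ => hw (β, i)) (mem_univ α)
  have hw1 : ∑ p, w p = 1 := by
    simp only [w, Fintype.sum_prod_type, ← mul_sum, hP1, mul_one, hlam1]
  have hx : ∀ p, w p ≠ 0 → 0 < x p := fun ⟨α, i⟩ h =>
    div_pos ((hw _).lt_of_ne' h |>.trans_le (hle_μ α i))
      ((hlam α).lt_of_ne' (left_ne_zero_of_mul h))
  have hlog : ∑ p, w p * log (x p) = ∑ i, μ i * log (μ i) - ∑ α, lam α * log (lam α) := by
    have hsplit : ∀ p, w p * log (x p) = w p * log (μ p.2) - w p * log (lam p.1) := fun p => by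
      rcases eq_or_ne (w p) 0 with h | h
      · simp [h]
      · have hμp : 0 < μ p.2 := (hw p).lt_of_ne' h |>.trans_le (hle_μ p.1 p.2)
        rw [log_div hμp.ne' (left_ne_zero_of_mul h), mul_sub]
    rw [sum_congr rfl fun p _ => hsplit p, sum_sub_distrib, Fintype.sum_prod_type,
      Fintype.sum_prod_type, sum_comm]
    congr 1
    · simp only [w, ← sum_mul, ← hμ]
    · simp only [w, mul_comm (lam _), mul_assoc, ← sum_mul, hP1, one_mul]
  have hwx : ∑ p, w p * x p ≤ B := by
    refine le_trans ?_ hB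
    rw [Fintype.sum_prod_type]
    refine sum_le_sum fun α _ => sum_le_sum fun i _ => ?_
    rcases eq_or_ne (lam α) 0 with h | h
    · simpa [w, x, h] using mul_nonneg (hP i α) (hle_μ α i |>.trans' (hw _))
    · exact le_of_eq (by simp only [w, x]; field_simp)
  linarith [sum_mul_log_le_log_of_sum_mul_le univ (fun p _ => hw p) hw1 (fun p _ => hx p) hwx]

section
variable {n : Type*} [Fintype n]

theorem Matrix.dotProduct_sum_smul_vecMulVec_self_mulVec {ι R : Type*} [Fintype ι]
    [CommSemiring R]    (c : ι → R) (u : ι → n → R) (x : n → R) :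
    x ⬝ᵥ ((∑ α, c α • vecMulVec (u α) (u α)) *ᵥ x) = ∑ α, c α * (x ⬝ᵥ u α) ^ 2 := by
  simp only [sum_mulVec, dotProduct_sum, smul_mulVec, vecMulVec_mulVec, op_smul_eq_smul,
    dotProduct_smul, smul_eq_mul]
  exact sum_congr rfl fun α _ => by rw [dotProduct_comm (u α)]; ring

variable [DecidableEq n]

theorem Matrix.dotProduct_mulVec_le_norm_toEuclideanCLM_mul (A : Matrix n n ℝ) (x : n → ℝ) :
    x ⬝ᵥ (A *ᵥ x) ≤ ‖toEuclideanCLM (𝕜 := ℝ) A‖ * (x ⬝ᵥ x) := by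
  have hinner : ∀ y : n → ℝ, inner ℝ (WithLp.toLp 2 x) (WithLp.toLp 2 y) = x ⬝ᵥ y := fun y => by
    rw [EuclideanSpace.inner_toLp_toLp, star_trivial, dotProduct_comm]
  set L := toEuclideanCLM (𝕜 := ℝ) A
  calc x ⬝ᵥ (A *ᵥ x) = inner ℝ (WithLp.toLp 2 x) (L (WithLp.toLp 2 x)) := by
        rw [toEuclideanCLM_toLp, hinner]
    _ ≤ ‖WithLp.toLp 2 x‖ * (‖L‖ * ‖WithLp.toLp 2 x‖) :=
        (real_inner_le_norm _ _).trans
          (mul_le_mul_of_nonneg_left (L.le_opNorm _) (norm_nonneg _))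
    _ = ‖L‖ * (x ⬝ᵥ x) := by
        rw [← hinner x, real_inner_self_eq_norm_mul_norm]; ring

variable {A : Matrix n n ℝ} (hA : A.IsHermitian)

theorem Matrix.IsHermitian.sum_eigenvectorBasis_dotProduct_mul (x y : n → ℝ) :
    ∑ i, (hA.eigenvectorBasis i ⬝ᵥ x) * (hA.eigenvectorBasis i ⬝ᵥ y) = x ⬝ᵥ y := by
  have := (hA.eigenvectorBasis).sum_inner_mul_inner (WithLp.toLp 2 x) (WithLp.toLp 2 y)
  simpa [EuclideanSpace.inner_eq_star_dotProduct, dotProduct_comm] using this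

theorem Matrix.IsHermitian.eigenvalues_eq_dotProduct (i : n) :
    hA.eigenvalues i = hA.eigenvectorBasis i ⬝ᵥ (A *ᵥ hA.eigenvectorBasis i) := by
  simpa using hA.eigenvalues_eq i

theorem Matrix.IsHermitian.dotProduct_mulVec_self_eq_sum (x : n → ℝ) :
    x ⬝ᵥ (A *ᵥ x) = ∑ i, (hA.eigenvectorBasis i ⬝ᵥ x) ^ 2 * hA.eigenvalues i := by
  rw [← hA.sum_eigenvectorBasis_dotProduct_mul]
  refine sum_congr rfl fun i _ => ?_
  rw [dotProduct_mulVec, ← mulVec_transpose, ← conjTranspose_eq_transpose_of_trivial, hA.eq,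
    mulVec_eigenvectorBasis, smul_dotProduct, smul_eq_mul, dotProduct_comm _ x]
  ring

end

theorem Matrix.sum_dotProduct_mulVec_le_norm_toEuclideanCLM {n ι : Type*} [Fintype n]
    [DecidableEq n] [Fintype ι]
    {lam : ι → ℝ} (hlam : ∀ α, 0 ≤ lam α) (hlam1 : ∑ α, lam α = 1)
    {u : ι → n → ℝ} (hu : ∀ α, u α ⬝ᵥ u α = 1) :
    ∑ α, u α ⬝ᵥ ((∑ β, lam β • vecMulVec (u β) (u β)) *ᵥ u α) ≤
      ‖toEuclideanCLM (𝕜 := ℝ) (∑ α, vecMulVec (u α) (u α))‖ := by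
  set T := ∑ α, vecMulVec (u α) (u α)
  have hT : ∀ β, u β ⬝ᵥ (T *ᵥ u β) ≤ ‖toEuclideanCLM (𝕜 := ℝ) T‖ := fun β => by
    simpa [hu] using dotProduct_mulVec_le_norm_toEuclideanCLM_mul T (u β)
  calc ∑ α, u α ⬝ᵥ ((∑ β, lam β • vecMulVec (u β) (u β)) *ᵥ u α)
      = ∑ β, lam β * (u β ⬝ᵥ (T *ᵥ u β)) := by
        have hT1 : T = ∑ α, (1 : ℝ) • vecMulVec (u α) (u α) := by simp only [one_smul, T]
        simp only [hT1, dotProduct_sum_smul_vecMulVec_self_mulVec, one_mul, mul_sum]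
        rw [sum_comm]
        exact sum_congr rfl fun β _ => sum_congr rfl fun α _ => by rw [dotProduct_comm]
    _ ≤ ∑ β, lam β * ‖toEuclideanCLM (𝕜 := ℝ) T‖ :=
        sum_le_sum fun β _ => mul_le_mul_of_nonneg_left (hT β) (hlam β)
    _ = ‖toEuclideanCLM (𝕜 := ℝ) T‖ := by rw [← sum_mul, hlam1, one_mul]

theorem entropy_lower_bound_nonorthogonal_projections_general {n m : ℕ}
    (lam : Fin m → ℝ) (hlam : ∀ α, 0 ≤ lam α) (hlam1 : ∑ α, lam α = 1)
    (u : Fin m → (Fin n → ℝ)) (hu : ∀ α, u α ⬝ᵥ u α = 1)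
    (hhat : (∑ α, lam α • Matrix.vecMulVec (u α) (u α)).IsHermitian) :
    -∑ i, hhat.eigenvalues i * Real.log (hhat.eigenvalues i) ≥
      (-∑ α, lam α * Real.log (lam α)) -
        Real.log ‖Matrix.toEuclideanCLM (𝕜 := ℝ) (n := Fin n)
          (∑ α, Matrix.vecMulVec (u α) (u α))‖ := by
  set P : Fin n → Fin m → ℝ := fun i α => (hhat.eigenvectorBasis i ⬝ᵥ u α) ^ 2
  have hμ : ∀ i, hhat.eigenvalues i = ∑ α, lam α * P i α := fun i => by
    rw [hhat.eigenvalues_eq_dotProduct, dotProduct_sum_smul_vecMulVec_self_mulVec]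
  have hP1 : ∀ α, ∑ i, P i α = 1 := fun α => by
    simpa only [P, sq, hu] using hhat.sum_eigenvectorBasis_dotProduct_mul (u α) (u α)
  have hB := sum_dotProduct_mulVec_le_norm_toEuclideanCLM hlam hlam1 hu
  simp only [hhat.dotProduct_mulVec_self_eq_sum] at hB
  have := Real.sum_mul_log_le_of_stochastic_mix hlam hlam1 (fun i α => sq_nonneg _) hP1 hμ hB
  linarith

/-- Entropy loss when replacing the orthonormal eigenvectors of a density matrix by
non-orthogonal unit vectors: `S(Γ̂) ≥ S(Γ) − ln‖Σ_α P_α‖`. Here `Γ = Σ λ_α |ψ_α⟩⟨ψ_α|`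
with `(ψ_α)` orthonormal, `P_α = |u_α⟩⟨u_α|` are rank-one orthogonal projections
(`u_α` unit vectors, not necessarily orthogonal), `Γ̂ = Σ λ_α P_α`, the entropies are
computed from the eigenvalues, and `‖·‖` is the operator norm. -/
theorem entropy_lower_bound_nonorthogonal_projections {n m : ℕ}
    (lam : Fin m → ℝ) (hlam : ∀ α, 0 ≤ lam α) (hlam1 : ∑ α, lam α = 1)
    (ψ : Fin m → (Fin n → ℝ)) (hψ : ∀ α β, ψ α ⬝ᵥ ψ β = if α = β then 1 else 0)
    (u : Fin m → (Fin n → ℝ)) (hu : ∀ α, u α ⬝ᵥ u α = 1)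
    (hhat : (∑ α, lam α • Matrix.vecMulVec (u α) (u α)).IsHermitian) :
    -∑ i, hhat.eigenvalues i * Real.log (hhat.eigenvalues i) ≥
      (-∑ α, lam α * Real.log (lam α)) -
        Real.log ‖Matrix.toEuclideanCLM (𝕜 := ℝ) (n := Fin n)
          (∑ α, Matrix.vecMulVec (u α) (u α))‖ :=
  entropy_lower_bound_nonorthogonal_projections_general lam hlam hlam1 u hu hhat
end
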